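/- arXiv:1412.4386 — 5 statements merged into one kernel-verified Lean document; each statement's English description precedes it below -/
import Mathlib

section
/- Let E be a real Banach space, ∂_w a weak subdifferential, g : E → ]−∞,+∞] proper and lower semicontinuous, α, β > 0, u ∈ dom g, and g(u) ≤ inf_E g + αβ. Then there exists (s, x*) ∈ gra ∂_w g such that ‖s − u‖ ≤ α, g(s) ≤ g(u), and ‖x*‖ ≤ β. -/
open Pointwise

/-- The convex subdifferential of a continuous convex real function `h` at `x`. -/
def convSubdiff {E : Type*} [NormedAddCommGroup E] [NormedSpace ℝ E]
    (h : E → ℝ) (x : E) : Set (StrongDual ℝ E) :=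
  {z | ∀ y : E, h x + z (y - x) ≤ h y}

/-- A weak subdifferential: a rule associating with each proper lower semicontinuous
`f : E → ]-∞,+∞]` a multifunction `E ⇉ E*` such that (i) `0 ∈ ∂_w f(x)` whenever `f`
attains a strict global minimum at `x`, and (ii) `∂_w(f + h)(x) ⊆ ∂_w f(x) + ∂h(x)`
for every continuous convex real function `h` on `E`. -/
structure WeakSubdiff (E : Type*) [NormedAddCommGroup E] [NormedSpace ℝ E] where
  sd : (E → EReal) → E → Set (StrongDual ℝ E)
  zero_mem : ∀ f : E → EReal, (∃ x, f x ≠ ⊤) → (∀ x, f x ≠ ⊥) →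
    LowerSemicontinuous f →
    ∀ x : E, (∀ y : E, y ≠ x → f x < f y) → 0 ∈ sd f x
  sum_rule : ∀ f : E → EReal, (∃ x, f x ≠ ⊤) → (∀ x, f x ≠ ⊥) →
    LowerSemicontinuous f →
    ∀ h : E → ℝ, Continuous h → ConvexOn ℝ Set.univ h →
    ∀ x : E, sd (fun z => f z + (h z : EReal)) x ⊆ sd f x + convSubdiff h x

/-!
Ekeland's variational principle with slope `β`, applied to the truncation `min g (g u)`, gives a
point `s` with `β ‖s - u‖ ≤ g u - g s ≤ α β` at which `g + β ‖· - s‖` has a strict global minimum.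
Hence `0 ∈ ∂_w (g + β ‖· - s‖) s`, and the sum rule writes `0 = x* + z*` with `x* ∈ ∂_w g s` and
`z*` a convex subgradient of `β ‖· - s‖`, which has norm at most `β`.
-/

open Set Filter Topology Metric

section Ekeland

variable {X : Type*} [MetricSpace X] {f : X → ℝ} {ε : ℝ} {x y : X}

def ekelandSet (f : X → ℝ) (ε : ℝ) (x : X) : Set X :=
  {y | f y + ε * dist y x ≤ f x}

lemma self_mem_ekelandSet : x ∈ ekelandSet f ε x := by
  simp [ekelandSet]

lemma isClosed_ekelandSet (hf : LowerSemicontinuous f) : IsClosed (ekelandSet f ε x) :=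
  have : LowerSemicontinuous fun y => f y + ε * dist y x :=
    hf.add (continuous_const.mul (continuous_id.dist continuous_const)).lowerSemicontinuous
  lowerSemicontinuous_iff_isClosed_preimage.mp this (f x)

lemma ekelandSet_subset (hε : 0 ≤ ε) (hy : y ∈ ekelandSet f ε x) :
    ekelandSet f ε y ⊆ ekelandSet f ε x := by
  intro z (hz : f z + ε * dist z y ≤ f y)
  have : ε * dist z x ≤ ε * dist z y + ε * dist y x := by
    rw [← mul_add]; exact mul_le_mul_of_nonneg_left (dist_triangle z y x) hε
  change f z + ε * dist z x ≤ f x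
  linarith [show f y + ε * dist y x ≤ f x from hy]

lemma exists_mem_ekelandSet_subset_closedBall (hbdd : BddBelow (range f)) (hε : 0 < ε)
    {δ : ℝ} (hδ : 0 < δ) (x : X) :
    ∃ y ∈ ekelandSet f ε x, ekelandSet f ε y ⊆ closedBall y (δ / ε) := by
  set m := sInf (f '' ekelandSet f ε x)
  obtain ⟨_, ⟨y, hy, rfl⟩, hym⟩ : ∃ a ∈ f '' ekelandSet f ε x, a < m + δ :=
    exists_lt_of_csInf_lt ⟨f x, x, self_mem_ekelandSet, rfl⟩ (lt_add_of_pos_right m hδ)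
  -- `f y` is within `δ` of the infimum of `f` on `ekelandSet f ε x ⊇ ekelandSet f ε y`
  refine ⟨y, hy, fun z hz => ?_⟩
  have hmz : m ≤ f z :=
    csInf_le (hbdd.mono (image_subset_range _ _)) ⟨z, ekelandSet_subset hε.le hy hz, rfl⟩
  have : f z + ε * dist z y ≤ f y := hz
  rw [mem_closedBall, le_div_iff₀ hε]
  linarith

theorem LowerSemicontinuous.exists_ekeland [CompleteSpace X] (hf : LowerSemicontinuous f)
    (hbdd : BddBelow (range f)) (hε : 0 < ε) (u : X) :
    ∃ s, f s + ε * dist s u ≤ f u ∧ ∀ y, y ≠ s → f s < f y + ε * dist y s := by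
  choose next hnext_mem hnext_ball using fun (n : ℕ) =>
    exists_mem_ekelandSet_subset_closedBall hbdd hε (pow_pos (one_half_pos (α := ℝ)) n)
  let x : ℕ → X := fun n => Nat.rec u (fun n xn => next n xn) n
  let T : ℕ → Set X := fun n => ekelandSet f ε (x (n + 1))
  have hT_anti : Antitone T :=
    antitone_nat_of_succ_le fun n => ekelandSet_subset hε.le (hnext_mem _ _)
  have hT_bdd : ∀ n, Bornology.IsBounded (T n) := fun n =>
    isBounded_closedBall.subset (hnext_ball n (x n))
  have hT_diam : Tendsto (fun n => diam (T n)) atTop (𝓝 0) := by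
    have hr : Tendsto (fun n : ℕ => 2 * ((1 / 2 : ℝ) ^ n / ε)) atTop (𝓝 0) := by
      have := tendsto_pow_atTop_nhds_zero_of_lt_one (r := (1 / 2 : ℝ)) (by norm_num) (by norm_num)
      simpa using (this.div_const ε).const_mul 2
    refine squeeze_zero (fun n => diam_nonneg) (fun n => ?_) hr
    exact diam_le_of_subset_closedBall (by positivity) (hnext_ball n (x n))
  obtain ⟨s, hs⟩ : (⋂ n, T n).Nonempty :=
    nonempty_iInter_of_nonempty_biInter (fun n => isClosed_ekelandSet hf) hT_bdd
      (fun N => ⟨x (N + 1), mem_iInter₂.2 fun n hn => hT_anti hn self_mem_ekelandSet⟩) hT_diam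
  rw [mem_iInter] at hs
  refine ⟨s, ekelandSet_subset hε.le (hnext_mem 0 u) (hs 0), fun y hy => ?_⟩
  by_contra! hys
  have hyT : ∀ n, y ∈ T n := fun n => ekelandSet_subset hε.le (hs n) hys
  exact hy (dist_le_zero.1 (ge_of_tendsto' hT_diam fun n =>
    dist_le_diam_of_mem (hT_bdd n) (hyT n) (hs n)))

end Ekeland

section ExtendedReal

variable {X : Type*}

lemma LowerSemicontinuous.of_coe_ereal [TopologicalSpace X] {f : X → ℝ}
    (hf : LowerSemicontinuous fun x => (f x : EReal)) : LowerSemicontinuous f := fun x y hy =>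
  (hf x y (EReal.coe_lt_coe_iff.2 hy)).mono fun _ hz => EReal.coe_lt_coe_iff.1 hz

lemma LowerSemicontinuous.add_coe_of_continuous [TopologicalSpace X] {g : X → EReal}
    {h : X → ℝ} (hg : LowerSemicontinuous g) (hh : Continuous h) :
    LowerSemicontinuous fun x => g x + (h x : EReal) :=
  hg.add' (continuous_coe_real_ereal.comp hh).lowerSemicontinuous fun _ =>
    EReal.continuousAt_add (Or.inr (EReal.coe_ne_bot _)) (Or.inr (EReal.coe_ne_top _))

theorem LowerSemicontinuous.exists_ereal_ekeland [MetricSpace X] [CompleteSpace X]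
    {g : X → EReal} (hg : LowerSemicontinuous g) {m : ℝ} (hm : ∀ x, (m : EReal) ≤ g x)
    {u : X} (hu : g u ≠ ⊤) {ε : ℝ} (hε : 0 < ε) :
    ∃ s, g s + ((ε * dist s u : ℝ) : EReal) ≤ g u ∧
      ∀ y, y ≠ s → g s < g y + ((ε * dist y s : ℝ) : EReal) := by
  set f : X → ℝ := fun x => (min (g x) (g u)).toReal
  have hf_coe : ∀ x, (f x : EReal) = min (g x) (g u) := fun x =>
    EReal.coe_toReal ((min_le_right _ _).trans_lt hu.lt_top).ne
      ((EReal.bot_lt_coe m).trans_le (le_min (hm x) (hm u))).ne'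
  have hf_lsc : LowerSemicontinuous f :=
    .of_coe_ereal (by simpa only [hf_coe] using hg.inf lowerSemicontinuous_const)
  have hf_bdd : BddBelow (range f) := ⟨m, by
    rintro _ ⟨x, rfl⟩
    exact EReal.coe_le_coe_iff.1 ((hf_coe x).symm ▸ le_min (hm x) (hm u))⟩
  have hf_u : (f u : EReal) = g u := (hf_coe u).trans (min_self _)
  obtain ⟨s, hsu, hmin⟩ := hf_lsc.exists_ekeland hf_bdd hε u
  have hf_s : (f s : EReal) = g s := by
    rcases eq_or_ne s u with rfl | hne
    · exact hf_u
    have hlt : min (g s) (g u) < g u := by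
      rw [← hf_coe, ← hf_u, EReal.coe_lt_coe_iff]
      nlinarith [mul_pos hε (dist_pos.2 hne)]
    rw [hf_coe, min_eq_left (min_lt_iff.1 hlt |>.resolve_right (lt_irrefl _)).le]
  refine ⟨s, ?_, fun y hy => ?_⟩
  · rw [← hf_s, ← hf_u, ← EReal.coe_add, EReal.coe_le_coe_iff]
    exact hsu
  · calc g s = f s := hf_s.symm
      _ < ((f y + ε * dist y s : ℝ) : EReal) := EReal.coe_lt_coe_iff.2 (hmin y hy)
      _ ≤ g y + ((ε * dist y s : ℝ) : EReal) := by
        rw [EReal.coe_add, hf_coe]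
        exact add_le_add_left (min_le_left _ _) _

end ExtendedReal

section WeakSubdifferential

variable {E : Type*} [NormedAddCommGroup E] [NormedSpace ℝ E]

lemma convexOn_mul_norm_sub {c : ℝ} (hc : 0 ≤ c) (s : E) :
    ConvexOn ℝ univ fun z => c * ‖z - s‖ := by
  simpa [sub_eq_add_neg] using ((convexOn_norm convex_univ).translate_left (-s)).smul hc

lemma norm_le_of_mem_convSubdiff_mul_norm_sub {c : ℝ} (hc : 0 ≤ c) {s : E}
    {z : StrongDual ℝ E} (hz : z ∈ convSubdiff (fun y => c * ‖y - s‖) s) : ‖z‖ ≤ c := by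
  refine z.opNorm_le_bound hc fun v => abs_le.2 ⟨?_, ?_⟩
  · exact neg_le.1 (by simpa using hz (s - v))
  · simpa using hz (s + v)

theorem WeakSubdiff.exists_mem_sd_norm_le (W : WeakSubdiff E) {g : E → EReal}
    (hbot : ∀ x, g x ≠ ⊥) (hg : LowerSemicontinuous g) {β : ℝ} (hβ : 0 ≤ β) {s : E}
    (hs : g s ≠ ⊤) (hmin : ∀ y, y ≠ s → g s < g y + ((β * ‖y - s‖ : ℝ) : EReal)) :
    ∃ x' ∈ W.sd g s, ‖x'‖ ≤ β := by
  set h : E → ℝ := fun z => β * ‖z - s‖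
  have hh_cont : Continuous h := continuous_const.mul (continuous_id.sub continuous_const).norm
  have hh_s : (h s : EReal) = 0 := by simp [h]
  have h0 : (0 : StrongDual ℝ E) ∈ W.sd (fun z => g z + (h z : EReal)) s := by
    refine W.zero_mem _ ⟨s, by rwa [hh_s, add_zero]⟩
      (fun z => EReal.add_eq_bot_iff.not.2 (not_or.2 ⟨hbot z, EReal.coe_ne_bot _⟩))
      (hg.add_coe_of_continuous hh_cont) s fun y hy => ?_
    rw [hh_s, add_zero]
    exact hmin y hy
  obtain ⟨x', hx', z, hz, hsum⟩ :=
    W.sum_rule g ⟨s, hs⟩ hbot hg h hh_cont (convexOn_mul_norm_sub hβ s) s h0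
  refine ⟨x', hx', ?_⟩
  rw [eq_neg_of_add_eq_zero_left hsum, norm_neg]
  exact norm_le_of_mem_convSubdiff_mul_norm_sub hβ hz

end WeakSubdifferential

theorem stmt3_general {E : Type*} [NormedAddCommGroup E] [NormedSpace ℝ E] [CompleteSpace E]
    (W : WeakSubdiff E) (g : E → EReal)
    (hnotbot : ∀ x, g x ≠ ⊥)
    (hlsc : LowerSemicontinuous g)
    (α β : ℝ) (hβ : 0 < β)
    (u : E) (hu : g u ≠ ⊤)
    (hbound : g u ≤ (⨅ x : E, g x) + ((α * β : ℝ) : EReal)) :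
    ∃ (s : E) (x' : StrongDual ℝ E), x' ∈ W.sd g s ∧
      ‖s - u‖ ≤ α ∧ g s ≤ g u ∧ ‖x'‖ ≤ β := by
  have hinf_top : (⨅ x, g x) ≠ ⊤ := ne_top_of_le_ne_top hu (iInf_le g u)
  have hinf_bot : (⨅ x, g x) ≠ ⊥ := fun h => hnotbot u (by simpa [h] using hbound)
  set m := (⨅ x, g x).toReal
  have hm_eq : (m : EReal) = ⨅ x, g x := EReal.coe_toReal hinf_top hinf_bot
  have hm : ∀ x, (m : EReal) ≤ g x := fun x => hm_eq ▸ iInf_le g x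
  rw [← hm_eq] at hbound
  obtain ⟨s, hsu, hmin⟩ := hlsc.exists_ereal_ekeland hm hu hβ
  have hgs : g s ≤ g u :=
    le_trans (le_add_of_nonneg_right (EReal.coe_nonneg.2 (by positivity))) hsu
  have hdist : β * dist s u ≤ α * β := by
    have hchain := (add_le_add (hm s) le_rfl).trans (hsu.trans hbound)
    rw [← EReal.coe_add, ← EReal.coe_add, EReal.coe_le_coe_iff] at hchain
    linarith
  obtain ⟨x', hx', hx'_norm⟩ := W.exists_mem_sd_norm_le hnotbot hlsc hβ.le
    (ne_top_of_le_ne_top hu hgs) (by simpa only [dist_eq_norm] using hmin)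
  refine ⟨s, x', hx', ?_, hgs, hx'_norm⟩
  rw [← dist_eq_norm]
  exact le_of_mul_le_mul_left (by linarith) hβ

theorem stmt3 {E : Type*} [NormedAddCommGroup E] [NormedSpace ℝ E] [CompleteSpace E]
    (W : WeakSubdiff E) (g : E → EReal)
    (hproper : ∃ x, g x ≠ ⊤) (hnotbot : ∀ x, g x ≠ ⊥)
    (hlsc : LowerSemicontinuous g)
    (α β : ℝ) (hα : 0 < α) (hβ : 0 < β)
    (u : E) (hu : g u ≠ ⊤)
    (hbound : g u ≤ (⨅ x : E, g x) + ((α * β : ℝ) : EReal)) :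
    ∃ (s : E) (x' : StrongDual ℝ E), x' ∈ W.sd g s ∧
      ‖s - u‖ ≤ α ∧ g s ≤ g u ∧ ‖x'‖ ≤ β :=
  stmt3_general W g hnotbot hlsc α β hβ u hu hbound
end

section
/- (Brøndsted–Rockafellar property for weak subdifferentials) Let E be a real Banach space, ∂_w a weak subdifferential, α, β > 0, f : E → ]−∞,+∞] proper and lower semicontinuous, and (u, u*) ∈ E × E* with f(u) + f*(u*) ≤ ⟨u, u*⟩ + αβ. Then there exists (s, s*) ∈ gra ∂_w f such that ‖s − u‖ ≤ α, ‖s* − u*‖ ≤ β, and f(s) − ⟨s, u*⟩ ≤ f(u) − ⟨u, u*⟩. -/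
open Pointwise

/-- The Fenchel conjugate of `f : E → ]-∞,+∞]`. -/
noncomputable def fenchel {E : Type*} [NormedAddCommGroup E] [NormedSpace ℝ E]
    (f : E → EReal) (x' : StrongDual ℝ E) : EReal :=
  ⨆ x : E, ((x' x : EReal) - f x)

/-!
Ekeland's variational principle, applied with weight `β` to `f - u*` (bounded below by `-f*(u*)`,
and within `αβ` of its infimum at `u`), gives a point `s` within `α` of `u`, no higher than `u`,
at which `f + β‖· - s‖ - u*` has a strict global minimum. Axiom (i) puts `0` in the weak
subdifferential of that sum, and axiom (ii) splits it as `s* + z` with `s* ∈ ∂_w f(s)` and `z` a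
subgradient of `β‖· - s‖ - u*`, so that `‖s* - u*‖ = ‖z + u*‖ ≤ β`.

Ekeland's principle is proved with Brøndsted's sets `{y | g y + β d(y, x) ≤ g x}`: choosing each
`x (n + 1)` as an almost minimizer of `g` on the set of `x n` produces nested closed sets whose
radii tend to `0`, and their common point is the required strict minimizer.
-/

open Filter Topology

theorem LowerSemicontinuous.toReal {X : Type*} [TopologicalSpace X] {f : X → EReal}
    (hf : LowerSemicontinuous f) (hbot : ∀ x, f x ≠ ⊥) (htop : ∀ x, f x ≠ ⊤) :
    LowerSemicontinuous fun x => (f x).toReal := by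
  intro x y hy
  have hcoe : ∀ x, (y < (f x).toReal ↔ (y : EReal) < f x) := fun x => by
    rw [← EReal.coe_lt_coe_iff, EReal.coe_toReal (htop x) (hbot x)]
  filter_upwards [hf x y ((hcoe x).1 hy)] with x' hx' using (hcoe x').2 hx'

theorem LowerSemicontinuous.add_coe {X : Type*} [TopologicalSpace X] {f : X → EReal}
    (hf : LowerSemicontinuous f) {h : X → ℝ} (hh : Continuous h) :
    LowerSemicontinuous fun x => f x + h x :=
  hf.add' (continuous_coe_real_ereal.comp hh).lowerSemicontinuous
    fun _ => EReal.continuousAt_add (Or.inr (EReal.coe_ne_bot _)) (Or.inr (EReal.coe_ne_top _))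

namespace Ekeland

variable {X : Type*} [MetricSpace X] (g : X → ℝ) (β : ℝ)

def lowerSet (x : X) : Set X := {y | g y + β * dist y x ≤ g x}

variable {g β}

theorem self_mem_lowerSet (x : X) : x ∈ lowerSet g β x := by
  simp [lowerSet]

theorem isClosed_lowerSet (hg : LowerSemicontinuous g) (x : X) : IsClosed (lowerSet g β x) :=
  (hg.add (continuous_const.mul (continuous_id.dist continuous_const)).lowerSemicontinuous)
    |>.isClosed_preimage (g x)

theorem lowerSet_subset_lowerSet (hβ : 0 ≤ β) {x y : X} (hy : y ∈ lowerSet g β x) :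
    lowerSet g β y ⊆ lowerSet g β x := fun z hz => by
  have := mul_le_mul_of_nonneg_left (dist_triangle z y x) hβ
  simp only [lowerSet, Set.mem_ofPred_eq] at hy hz ⊢
  linarith

theorem dist_le_of_mem_lowerSet (hβ : 0 < β) {x y : X} {δ : ℝ}
    (hx : ∀ z ∈ lowerSet g β x, g x ≤ g z + δ) (hy : y ∈ lowerSet g β x) :
    dist y x ≤ δ / β := by
  rw [le_div_iff₀ hβ, mul_comm]
  linarith [hx y hy, show g y + β * dist y x ≤ g x from hy]

theorem exists_mem_lowerSet_forall_le_add (hbdd : BddBelow (Set.range g)) (hβ : 0 ≤ β) (x : X)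
    {δ : ℝ} (hδ : 0 < δ) :
    ∃ y ∈ lowerSet g β x, ∀ z ∈ lowerSet g β y, g y ≤ g z + δ := by
  obtain ⟨_, ⟨y, hy, rfl⟩, hlt⟩ :=
    Real.lt_sInf_add_pos ((Set.nonempty_of_mem (self_mem_lowerSet x)).image g) hδ
  refine ⟨y, hy, fun z hz => ?_⟩
  have hzx := lowerSet_subset_lowerSet hβ hy hz
  linarith [csInf_le (hbdd.mono (Set.image_subset_range g _)) (Set.mem_image_of_mem g hzx)]

end Ekeland

open Ekeland in
theorem LowerSemicontinuous.ekeland {X : Type*} [MetricSpace X] [CompleteSpace X]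
    {g : X → ℝ} {β : ℝ} (hg : LowerSemicontinuous g)
    (hbdd : BddBelow (Set.range g)) (hβ : 0 < β) (u : X) :
    ∃ s, g s + β * dist s u ≤ g u ∧ ∀ y ≠ s, g s < g y + β * dist y s := by
  have hnext : ∀ (x : X) (n : ℕ), ∃ y ∈ lowerSet g β x,
      ∀ z ∈ lowerSet g β y, g y ≤ g z + 1 / (n + 1) :=
    fun x n => exists_mem_lowerSet_forall_le_add hbdd hβ.le x (by positivity)
  choose next hnext_mem hnext_le using hnext
  let x : ℕ → X := fun n => Nat.rec (next u 0) (fun n xn => next xn (n + 1)) n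
  set r : ℕ → ℝ := fun n => 1 / (n + 1) / β
  have hr : Tendsto r atTop (𝓝 0) := by
    simpa [r] using tendsto_one_div_add_atTop_nhds_zero_nat.div_const β
  have hanti : Antitone fun n => lowerSet g β (x n) :=
    antitone_nat_of_succ_le fun n => lowerSet_subset_lowerSet hβ.le (hnext_mem (x n) (n + 1))
  have hball : ∀ n, ∀ y ∈ lowerSet g β (x n), dist y (x n) ≤ r n := by
    rintro (_ | n) y hy
    · exact dist_le_of_mem_lowerSet hβ (hnext_le u 0) hy
    · exact dist_le_of_mem_lowerSet hβ (hnext_le (x n) (n + 1)) hy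
  have htendsto : ∀ y, (∀ n, y ∈ lowerSet g β (x n)) → Tendsto x atTop (𝓝 y) := fun y hy =>
    tendsto_iff_dist_tendsto_zero.2 <| squeeze_zero (fun _ => dist_nonneg)
      (fun n => (dist_comm _ _).trans_le (hball n y (hy n))) hr
  have hx_mem : ∀ {m n}, n ≤ m → x m ∈ lowerSet g β (x n) :=
    fun h => hanti h (self_mem_lowerSet _)
  have hcauchy : CauchySeq x := by
    refine cauchySeq_of_le_tendsto_0 (fun N => 2 * r N) (fun n m N hn hm => ?_)
      (by simpa using hr.const_mul 2)
    linarith [dist_triangle_right (x n) (x m) (x N), hball N _ (hx_mem hn),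
      hball N _ (hx_mem hm)]
  obtain ⟨s, hs⟩ := cauchySeq_tendsto_of_complete hcauchy
  have hs_mem : ∀ n, s ∈ lowerSet g β (x n) := fun n =>
    (isClosed_lowerSet hg _).mem_of_tendsto hs (eventually_ge_atTop n |>.mono fun _ => hx_mem)
  refine ⟨s, lowerSet_subset_lowerSet hβ.le (hnext_mem u 0) (hs_mem 0), fun y hys => ?_⟩
  by_contra! hy
  exact hys <| tendsto_nhds_unique
    (htendsto y fun n => lowerSet_subset_lowerSet hβ.le (hs_mem n) hy) hs

theorem LowerSemicontinuous.ekeland_ereal {X : Type*} [MetricSpace X] [CompleteSpace X]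
    {g : X → EReal} (hg : LowerSemicontinuous g) {m : ℝ} (hm : ∀ x, (m : EReal) ≤ g x)
    {β ε : ℝ} (hβ : 0 < β) {u : X} (hu : g u ≤ ↑(m + ε)) :
    ∃ s, g s ≤ g u ∧ dist s u ≤ ε / β ∧ ∀ y ≠ s, g s < g y + ↑(β * dist y s) := by
  -- truncated at the level `g u`, the function becomes real-valued and keeps its minimizers
  set t : X → EReal := fun x => min (g x) (g u)
  have ht_ne_bot : ∀ x, t x ≠ ⊥ := fun x =>
    ne_bot_of_le_ne_bot (EReal.coe_ne_bot m) (le_min (hm x) (hm u))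
  have ht_ne_top : ∀ x, t x ≠ ⊤ := fun x =>
    ne_top_of_le_ne_top (EReal.coe_ne_top _) ((min_le_right _ _).trans hu)
  set g₀ : X → ℝ := fun x => (t x).toReal
  have hg₀ : ∀ x, (g₀ x : EReal) = t x := fun x => EReal.coe_toReal (ht_ne_top x) (ht_ne_bot x)
  have hm_le : ∀ x, m ≤ g₀ x := fun x =>
    EReal.coe_le_coe_iff.1 <| (hg₀ x).symm ▸ le_min (hm x) (hm u)
  obtain ⟨s, hsu, hs_min⟩ : ∃ s, g₀ s + β * dist s u ≤ g₀ u ∧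
      ∀ y ≠ s, g₀ s < g₀ y + β * dist y s :=
    ((hg.inf lowerSemicontinuous_const).toReal ht_ne_bot ht_ne_top).ekeland
      ⟨m, by rintro _ ⟨x, rfl⟩; exact hm_le x⟩ hβ u
  have htu : t u = g u := min_self _
  have hgs : g s ≤ g u := by
    by_contra! hlt
    have hts : g₀ s = g₀ u := by simp only [g₀, t, min_eq_right hlt.le, min_self]
    have : dist s u = 0 := by nlinarith [dist_nonneg (x := s) (y := u)]
    exact hlt.ne (by rw [dist_eq_zero.1 this])
  have hts : t s = g s := min_eq_left hgs
  refine ⟨s, hgs, ?_, fun y hy => ?_⟩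
  · have hu_le : g₀ u ≤ m + ε := EReal.coe_le_coe_iff.1 <| (hg₀ u).trans htu ▸ hu
    rw [le_div_iff₀ hβ, mul_comm]
    linarith [hm_le s]
  · calc g s = g₀ s := by rw [hg₀, hts]
      _ < ↑(g₀ y + β * dist y s) := EReal.coe_lt_coe_iff.2 (hs_min y hy)
      _ ≤ g y + ↑(β * dist y s) := by
        rw [EReal.coe_add, hg₀]; exact add_le_add_left (min_le_left _ _) _

theorem fenchel_ne_bot {E : Type*} [NormedAddCommGroup E] [NormedSpace ℝ E]
    {f : E → EReal} (x' : StrongDual ℝ E) {x : E} (hx_top : f x ≠ ⊤) (hx_bot : f x ≠ ⊥) :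
    fenchel f x' ≠ ⊥ := by
  have : (x' x - f x : EReal) = ↑(x' x - (f x).toReal) := by
    rw [EReal.coe_sub, EReal.coe_toReal hx_top hx_bot]
  exact ne_bot_of_le_ne_bot (this ▸ EReal.coe_ne_bot _) (le_iSup (fun x => (x' x : EReal) - f x) x)

theorem neg_fenchel_le {E : Type*} [NormedAddCommGroup E] [NormedSpace ℝ E]
    (f : E → EReal) (x' : StrongDual ℝ E) (x : E) : -fenchel f x' ≤ f x - x' x := by
  rw [EReal.neg_le, EReal.neg_sub (.inr (EReal.coe_ne_bot _)) (.inr (EReal.coe_ne_top _)),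
    add_comm]
  exact le_iSup (fun x => (x' x : EReal) - f x) x

theorem ContinuousLinearMap.opNorm_le_of_forall_apply_le {E : Type*} [NormedAddCommGroup E]
    [NormedSpace ℝ E]
    (z : E →L[ℝ] ℝ) {β : ℝ} (hβ : 0 ≤ β) (h : ∀ v, z v ≤ β * ‖v‖) : ‖z‖ ≤ β :=
  z.opNorm_le_bound hβ fun v => abs_le.2 ⟨by linarith [map_neg z v ▸ norm_neg v ▸ h (-v)], h v⟩

theorem convexOn_mul_norm_sub_sub {E : Type*} [NormedAddCommGroup E] [NormedSpace ℝ E]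
    {β : ℝ} (hβ : 0 ≤ β) (s : E) (x' : StrongDual ℝ E) :
    ConvexOn ℝ Set.univ fun y => β * ‖y - s‖ - x' y := by
  have := (((convexOn_norm convex_univ).translate_left (-s)).smul hβ).sub
    (x'.toLinearMap.concaveOn convex_univ)
  rw [Set.preimage_univ] at this
  exact this.congr fun y _ => by simp [sub_eq_add_neg]

theorem norm_add_le_of_mem_convSubdiff {E : Type*} [NormedAddCommGroup E] [NormedSpace ℝ E]
    {β : ℝ} (hβ : 0 ≤ β) {s : E} {x' z : StrongDual ℝ E}
    (hz : z ∈ convSubdiff (fun y => β * ‖y - s‖ - x' y) s) : ‖z + x'‖ ≤ β :=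
  (z + x').opNorm_le_of_forall_apply_le hβ fun v => by
    have := hz (v + s)
    simp only [add_sub_cancel_right, sub_self, norm_zero, mul_zero, zero_sub, map_add] at this
    rw [add_apply]
    linarith

theorem WeakSubdiff.exists_mem_sd_norm_sub_le {E : Type*} [NormedAddCommGroup E]
    [NormedSpace ℝ E] (W : WeakSubdiff E) {f : E → EReal} (hproper : ∃ x, f x ≠ ⊤)
    (hnotbot : ∀ x, f x ≠ ⊥) (hlsc : LowerSemicontinuous f) (x' : StrongDual ℝ E)
    {β : ℝ} (hβ : 0 ≤ β) {s : E}
    (hs : ∀ y ≠ s, f s - x' s < f y - x' y + ↑(β * ‖y - s‖)) :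
    ∃ s' ∈ W.sd f s, ‖s' - x'‖ ≤ β := by
  set h : E → ℝ := fun y => β * ‖y - s‖ - x' y
  have hcont : Continuous h := by fun_prop
  have hF : ∀ y, f y + h y = f y - x' y + ↑(β * ‖y - s‖) := fun y => by
    simp only [h, sub_eq_add_neg, EReal.coe_add, EReal.coe_neg]
    ac_rfl
  obtain ⟨x₀, hx₀⟩ := hproper
  have h0 : 0 ∈ W.sd (fun y => f y + h y) s := by
    refine W.zero_mem _ ⟨x₀, ?_⟩
      (fun y => EReal.add_ne_bot_iff.2 ⟨hnotbot y, EReal.coe_ne_bot _⟩) (hlsc.add_coe hcont) s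
      fun y hy => ?_
    · exact (EReal.add_ne_top_iff_ne_top_left (EReal.coe_ne_bot _) (EReal.coe_ne_top _)).2 hx₀
    · simpa [hF] using hs y hy
  obtain ⟨s', hs', z, hz, hsum⟩ :=
    W.sum_rule f ⟨x₀, hx₀⟩ hnotbot hlsc h hcont (convexOn_mul_norm_sub_sub hβ s x') s h0
  refine ⟨s', hs', ?_⟩
  rw [eq_neg_of_add_eq_zero_left hsum, ← neg_add', norm_neg]
  exact norm_add_le_of_mem_convSubdiff hβ hz

theorem stmt4_general {E : Type*} [NormedAddCommGroup E] [NormedSpace ℝ E] [CompleteSpace E]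
    (W : WeakSubdiff E) (α β : ℝ) (hβ : 0 < β)
    (f : E → EReal) (hproper : ∃ x, f x ≠ ⊤) (hnotbot : ∀ x, f x ≠ ⊥)
    (hlsc : LowerSemicontinuous f)
    (u : E) (u' : StrongDual ℝ E)
    (hbound : f u + fenchel f u' ≤ ((u' u : EReal) + ((α * β : ℝ) : EReal))) :
    ∃ (s : E) (s' : StrongDual ℝ E), s' ∈ W.sd f s ∧
      ‖s - u‖ ≤ α ∧ ‖s' - u'‖ ≤ β ∧
      f s - (u' s : EReal) ≤ f u - (u' u : EReal) := by
  have hfen_ne_bot : fenchel f u' ≠ ⊥ := by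
    obtain ⟨x₀, hx₀⟩ := hproper
    exact fenchel_ne_bot u' hx₀ (hnotbot x₀)
  obtain ⟨hfu_ne_top, hfen_ne_top⟩ := (EReal.add_ne_top_iff_ne_top₂ (hnotbot u) hfen_ne_bot).1
    (ne_top_of_le_ne_top (by rw [← EReal.coe_add]; exact EReal.coe_ne_top _) hbound)
  set F₀ := (fenchel f u').toReal
  have hF₀ : (F₀ : EReal) = fenchel f u' := EReal.coe_toReal hfen_ne_top hfen_ne_bot
  set φ : E → EReal := fun x => f x - u' x
  have hφ_lsc : LowerSemicontinuous φ := by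
    simpa [φ, sub_eq_add_neg] using hlsc.add_coe u'.continuous.neg
  have hφ_ge : ∀ x, ((-F₀ : ℝ) : EReal) ≤ φ x := fun x => by
    rw [EReal.coe_neg, hF₀]; exact neg_fenchel_le f u' x
  have hφu : φ u ≤ ↑(-F₀ + α * β) := by
    obtain ⟨a, ha⟩ : ∃ a : ℝ, f u = a := ⟨_, (EReal.coe_toReal hfu_ne_top (hnotbot u)).symm⟩
    rw [ha, ← hF₀] at hbound
    simp only [φ, ha]
    norm_cast at hbound ⊢
    linarith
  obtain ⟨s, hsu, hdist, hmin⟩ := hφ_lsc.ekeland_ereal hφ_ge hβ hφu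
  obtain ⟨s', hs', hnorm⟩ := W.exists_mem_sd_norm_sub_le hproper hnotbot hlsc u' hβ.le
    fun y hy => by simpa [dist_eq_norm] using hmin y hy
  refine ⟨s, s', hs', ?_, hnorm, hsu⟩
  rwa [← dist_eq_norm, ← mul_div_cancel_right₀ α hβ.ne']

theorem stmt4 {E : Type*} [NormedAddCommGroup E] [NormedSpace ℝ E] [CompleteSpace E]
    (W : WeakSubdiff E) (α β : ℝ) (hα : 0 < α) (hβ : 0 < β)
    (f : E → EReal) (hproper : ∃ x, f x ≠ ⊤) (hnotbot : ∀ x, f x ≠ ⊥)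
    (hlsc : LowerSemicontinuous f)
    (u : E) (u' : StrongDual ℝ E)
    (hbound : f u + fenchel f u' ≤ ((u' u : EReal) + ((α * β : ℝ) : EReal))) :
    ∃ (s : E) (s' : StrongDual ℝ E), s' ∈ W.sd f s ∧
      ‖s - u‖ ≤ α ∧ ‖s' - u'‖ ≤ β ∧
      f s - (u' s : EReal) ≤ f u - (u' u : EReal) :=
  stmt4_general W α β hβ f hproper hnotbot hlsc u u' hbound
end

section
/- Let λ > 1/2 and consider the set A = {(s, −2λs) : s ∈ ℝ} ⊆ ℝ × ℝ (the graph of the derivative of f(x) = −λx²). For every (y, y*) ∈ ℝ × ℝ, taking s = (y + y*)/(1 − 2λ) one has r_L(s − y, −2λs − y*) = 0; consequently A is stably r_L-dense in ℝ × ℝ. -/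
/-- `r_L` on `ℝ × ℝ` (with `E* = ℝ`, pairing `x·x*`):
`r_L(x, x*) = ½x² + ½(x*)² + x·x* = ½(x + x*)²`. -/
noncomputable def rLR (x x' : ℝ) : ℝ :=
  1 / 2 * x ^ 2 + 1 / 2 * x' ^ 2 + x * x'

/-- `A ⊆ ℝ × ℝ` is stably `r_L`-dense: for every `(y, y*)` there is `M ≥ 0` such that
the infimum of `r_L(s - y, s* - y*)` over `(s, s*) ∈ A` with `|s - y| ≤ M` and
`|s* - y*| ≤ M` is `0`. -/
def StablyRLDenseR (A : Set (ℝ × ℝ)) : Prop :=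
  ∀ y y' : ℝ, ∃ M : ℝ, 0 ≤ M ∧
    ∀ ε > (0 : ℝ), ∃ p ∈ A, |p.1 - y| ≤ M ∧ |p.2 - y'| ≤ M ∧
      rLR (p.1 - y) (p.2 - y') < ε

/-! The point `s = (y + y*)/(1 - 2λ)` is where the line `s ↦ (s, -2λs)` meets the zero set
`x + x* = y + y*` of `r_L(· - y, · - y*)`; a set meeting that zero set for every `(y, y*)` is
stably dense, with `M` the distance to the meeting point. -/

theorem rLR_eq_half_sq (x x' : ℝ) : rLR x x' = 1 / 2 * (x + x') ^ 2 := by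
  unfold rLR
  ring

theorem rLR_eq_zero_of_add_eq_zero {x x' : ℝ} (h : x + x' = 0) : rLR x x' = 0 := by
  rw [rLR_eq_half_sq, h]
  norm_num

theorem StablyRLDenseR.of_forall_exists_rLR_eq_zero {A : Set (ℝ × ℝ)}
    (h : ∀ y y' : ℝ, ∃ p ∈ A, rLR (p.1 - y) (p.2 - y') = 0) : StablyRLDenseR A := by
  intro y y'
  obtain ⟨p, hpA, hp⟩ := h y y'
  refine ⟨max |p.1 - y| |p.2 - y'|, (abs_nonneg _).trans (le_max_left _ _), fun ε hε => ?_⟩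
  exact ⟨p, hpA, le_max_left _ _, le_max_right _ _, hp ▸ hε⟩

theorem stmt7 (l : ℝ) (hl : 1 / 2 < l) :
    (∀ y y' : ℝ,
      rLR ((y + y') / (1 - 2 * l) - y) (-2 * l * ((y + y') / (1 - 2 * l)) - y') = 0) ∧
    StablyRLDenseR {p : ℝ × ℝ | ∃ s : ℝ, p = (s, -2 * l * s)} := by
  have hl' : 1 - 2 * l ≠ 0 := by linarith
  have hzero : ∀ y y' : ℝ,
      rLR ((y + y') / (1 - 2 * l) - y) (-2 * l * ((y + y') / (1 - 2 * l)) - y') = 0 := by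
    intro y y'
    apply rLR_eq_zero_of_add_eq_zero
    field_simp
    ring
  exact ⟨hzero, .of_forall_exists_rLR_eq_zero fun y y' => ⟨_, ⟨_, rfl⟩, hzero y y'⟩⟩
end

section
/- The monotone polar of the graph of cosine is empty: there is no pair (x, x*) ∈ ℝ × ℝ such that (y − x)(cos y − x*) ≥ 0 for all y ∈ ℝ. Equivalently, with A = {(y, cos y) : y ∈ ℝ} ⊆ ℝ × ℝ, one has A^μ = ∅. -/
/-!
Cosine is periodic, so every value it takes is taken both to the left and to the right of any
given `x`. A pair `(x, x')` in the monotone polar of a graph forces the function to lie below `x'`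
left of `x` and above `x'` right of `x`, so a periodic function with such a pair is constant;
cosine is not.
-/

/-- The monotone polar `A^μ` of `A ⊆ ℝ × ℝ`. -/
def monoPolarR (A : Set (ℝ × ℝ)) : Set (ℝ × ℝ) :=
  {p | ∀ q ∈ A, 0 ≤ (q.1 - p.1) * (q.2 - p.2)}

namespace Function.Periodic

variable {α β : Type*} [Field α] [LinearOrder α] [IsStrictOrderedRing α] [Archimedean α]
  {f : α → β} {c : α}

lemma exists_lt_apply_eq (hf : Periodic f c) (hc : 0 < c) (a x : α) : ∃ y < x, f y = f a := by
  obtain ⟨n, hn⟩ := exists_lt_nsmul hc (a - x)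
  refine ⟨a - n * c, ?_, hf.sub_nat_mul_eq n⟩
  rw [nsmul_eq_mul] at hn
  linarith

lemma exists_gt_apply_eq (hf : Periodic f c) (hc : 0 < c) (a x : α) : ∃ y > x, f y = f a := by
  obtain ⟨n, hn⟩ := exists_lt_nsmul hc (x - a)
  refine ⟨a + n * c, ?_, hf.nat_mul n a⟩
  rw [nsmul_eq_mul] at hn
  linarith

lemma apply_eq_of_forall_mul_sub_nonneg {f : α → α} (hf : Periodic f c) (hc : 0 < c)
    {x x' : α} (h : ∀ y, 0 ≤ (y - x) * (f y - x')) (a : α) : f a = x' := by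
  obtain ⟨y₁, hy₁, hfy₁⟩ := hf.exists_lt_apply_eq hc a x
  obtain ⟨y₂, hy₂, hfy₂⟩ := hf.exists_gt_apply_eq hc a x
  have hle : f y₁ - x' ≤ 0 := nonpos_of_mul_nonneg_right (h y₁) (sub_neg.2 hy₁)
  have hge : 0 ≤ f y₂ - x' := nonneg_of_mul_nonneg_right (h y₂) (sub_pos.2 hy₂)
  linarith

end Function.Periodic

lemma mem_monoPolarR_graph_iff (f : ℝ → ℝ) (p : ℝ × ℝ) :
    p ∈ monoPolarR {q | ∃ y, q = (y, f y)} ↔ ∀ y, 0 ≤ (y - p.1) * (f y - p.2) := by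
  simp [monoPolarR]

lemma not_exists_forall_mul_sub_cos_nonneg :
    ¬ ∃ x x' : ℝ, ∀ y : ℝ, 0 ≤ (y - x) * (Real.cos y - x') := by
  rintro ⟨x, x', h⟩
  have hconst := Real.cos_periodic.apply_eq_of_forall_mul_sub_nonneg Real.two_pi_pos h
  have h1 : Real.cos 0 = Real.cos Real.pi := (hconst 0).trans (hconst Real.pi).symm
  rw [Real.cos_zero, Real.cos_pi] at h1
  norm_num at h1

theorem stmt16 :
    (¬ ∃ x x' : ℝ, ∀ y : ℝ, 0 ≤ (y - x) * (Real.cos y - x')) ∧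
      monoPolarR {q : ℝ × ℝ | ∃ y : ℝ, q = (y, Real.cos y)} = ∅ := by
  refine ⟨not_exists_forall_mul_sub_cos_nonneg, Set.eq_empty_of_forall_notMem fun p hp => ?_⟩
  exact not_exists_forall_mul_sub_cos_nonneg
    ⟨p.1, p.2, (mem_monoPolarR_graph_iff Real.cos p).1 hp⟩
end

section
/- (Rockafellar) Let E be a real Banach space and f : E → ]−∞,+∞] a proper, convex, lower semicontinuous function. Then the subdifferential ∂f : E ⇉ E* is maximally monotone, i.e. gra ∂f = (gra ∂f)^μ. -/
/-!
Monotonicity of `∂f` is the sum of two subgradient inequalities. For maximality, let `(x, x')` be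
monotonically related to the graph of `∂f`. It suffices that `x` minimises `f + φₜ` for every
`t > 0`, where `φₜ u = t/2 ‖u - x‖² - x' (u - x)`: letting `t → 0` then gives `x' ∈ ∂f(x)`.
If some `y` does better, apply Ekeland's principle with a small slope `δ` to `f + φₜ` (bounded
below thanks to an affine minorant of `f`), starting from `y`. This gives `v` with
`(f + φₜ) v ≤ (f + φₜ) y` at which `f + φₜ + δ‖· - v‖` is minimal. Separating the epigraph of `f`
from the strict hypograph of the continuous convex part produces `w ∈ ∂f(v)` with
`-w ∈ ∂(φₜ + δ‖· - v‖)(v)`. Together with `0 ≤ (w - x') (v - x)` this forces `‖v - x‖ ≤ 2δ/t`, and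
lower semicontinuity of `f + φₜ` at `x` contradicts `(f + φₜ) v ≤ (f + φₜ) y < (f + φₜ) x`.
-/

/-- Convexity for a function `f : E → ]-∞,+∞]` (valued in `EReal`). -/
def ERealConvexOn {E : Type*} [NormedAddCommGroup E] [NormedSpace ℝ E]
    (f : E → EReal) : Prop :=
  ∀ x y : E, ∀ a b : ℝ, 0 ≤ a → 0 ≤ b → a + b = 1 →
    f (a • x + b • y) ≤ (a : EReal) * f x + (b : EReal) * f y

/-- The convex subdifferential of `f : E → ]-∞,+∞]` at `x`:
`∂f(x) = {x* : ∀ y, f(y) ≥ f(x) + ⟨y - x, x*⟩}`. -/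
def subdiff {E : Type*} [NormedAddCommGroup E] [NormedSpace ℝ E]
    (f : E → EReal) (x : E) : Set (StrongDual ℝ E) :=
  {x' | ∀ y : E, f x + ((x' (y - x) : ℝ) : EReal) ≤ f y}

/-- The monotone polar `A^μ` of `A ⊆ E × E*`. -/
def monoPolar {E : Type*} [NormedAddCommGroup E] [NormedSpace ℝ E]
    (A : Set (E × StrongDual ℝ E)) : Set (E × StrongDual ℝ E) :=
  {p | ∀ q ∈ A, 0 ≤ (q.2 - p.2) (q.1 - p.1)}

open Set Filter Metric

theorem LowerSemicontinuous.add_coe_real {α : Type*} [TopologicalSpace α] {f : α → EReal}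
    {φ : α → ℝ} (hf : LowerSemicontinuous f) (hφ : Continuous φ) :
    LowerSemicontinuous fun x => f x + φ x :=
  hf.add' (continuous_coe_real_ereal.comp hφ).lowerSemicontinuous fun _ =>
    EReal.continuousAt_add (Or.inr (EReal.coe_ne_bot _)) (Or.inr (EReal.coe_ne_top _))

theorem LowerSemicontinuous.of_coe_ereal_s17 {α : Type*} [TopologicalSpace α] {g : α → ℝ}
    (hg : LowerSemicontinuous fun x => (g x : EReal)) : LowerSemicontinuous g :=
  fun x c hc => (hg x c (EReal.coe_lt_coe_iff.2 hc)).mono fun _ => EReal.coe_lt_coe_iff.1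

theorem LowerSemicontinuous.isClosed_real_epigraph {α : Type*} [TopologicalSpace α]
    {f : α → EReal} (hf : LowerSemicontinuous f) : IsClosed {p : α × ℝ | f p.1 ≤ p.2} :=
  hf.isClosed_epigraph.preimage
    (continuous_fst.prodMk (continuous_coe_real_ereal.comp continuous_snd))

namespace Ekeland

variable {X : Type*} [MetricSpace X] {g : X → ℝ} {δ : ℝ}

variable (g δ) in
def cone (u : X) : Set X := {y | g y + δ * dist y u ≤ g u}

theorem mem_cone_self (u : X) : u ∈ cone g δ u := by simp [cone]

theorem cone_subset_cone (hδ : 0 ≤ δ) {u y : X} (hy : y ∈ cone g δ u) :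
    cone g δ y ⊆ cone g δ u := fun z hz => by
  simp only [cone, mem_ofPred_eq] at hy hz ⊢
  nlinarith [dist_triangle z y u]

theorem isClosed_cone (hg : LowerSemicontinuous g) (u : X) : IsClosed (cone g δ u) :=
  (hg.add (continuous_const.mul (continuous_id.dist continuous_const)).lowerSemicontinuous)
    |>.isClosed_preimage (g u)

theorem exists_mem_cone_cone_subset_closedBall (hδ : 0 < δ) (hg : BddBelow (range g)) (u : X)
    {r : ℝ} (hr : 0 < r) : ∃ y ∈ cone g δ u, cone g δ y ⊆ closedBall y r := by
  have hbdd : BddBelow (g '' cone g δ u) := hg.mono (image_subset_range _ _)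
  obtain ⟨_, ⟨y, hy, rfl⟩, hlt⟩ := exists_lt_of_csInf_lt ⟨g u, mem_image_of_mem g (mem_cone_self u)⟩
    (lt_add_of_pos_right (sInf (g '' cone g δ u)) (mul_pos hδ hr))
  refine ⟨y, hy, fun z hz => ?_⟩
  have hz_inf : sInf (g '' cone g δ u) ≤ g z :=
    csInf_le hbdd (mem_image_of_mem g (cone_subset_cone hδ.le hy hz))
  have hz' : g z + δ * dist z y ≤ g y := hz
  rw [mem_closedBall]
  nlinarith

theorem exists_forall_le_add_mul_dist [CompleteSpace X] (hg : LowerSemicontinuous g)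
    (hbdd : BddBelow (range g)) (hδ : 0 < δ) (z : X) :
    ∃ v, g v + δ * dist v z ≤ g z ∧ ∀ y, g v ≤ g y + δ * dist y v := by
  -- each step nearly minimises `g` on the current cone, so the nested closed cones shrink to `v`
  choose next hnext hsmall using fun (u : X) (n : ℕ) =>
    exists_mem_cone_cone_subset_closedBall hδ hbdd u (Nat.one_div_pos_of_nat (n := n))
  let u : ℕ → X := fun n => Nat.rec z (fun n x => next x n) n
  have hmem : ∀ n m, n ≤ m → u m ∈ cone g δ (u n) := fun n m hnm =>
    antitone_nat_of_succ_le (f := fun n => cone g δ (u n))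
      (fun n => cone_subset_cone hδ.le (hnext _ n)) hnm (mem_cone_self _)
  have hcauchy : CauchySeq u := by
    refine Metric.cauchySeq_iff'.2 fun ε hε => ?_
    obtain ⟨n, hn⟩ := exists_nat_one_div_lt hε
    exact ⟨n + 1, fun m hm => (hsmall _ n (hmem _ _ hm)).trans_lt hn⟩
  obtain ⟨v, hv⟩ := cauchySeq_tendsto_of_complete hcauchy
  have hv_mem : ∀ n, v ∈ cone g δ (u n) := fun n =>
    (isClosed_cone hg _).mem_of_tendsto hv (eventually_atTop.2 ⟨n, hmem n⟩)
  have hv_unique : ∀ y ∈ cone g δ v, y = v := by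
    intro y hy
    refine eq_of_forall_dist_le fun ε hε => ?_
    obtain ⟨n, hn⟩ := exists_nat_one_div_lt (half_pos hε)
    have hy' : dist y (u (n + 1)) ≤ 1 / (n + 1) :=
      hsmall _ n (cone_subset_cone hδ.le (hv_mem (n + 1)) hy)
    have hv' : dist v (u (n + 1)) ≤ 1 / (n + 1) := hsmall _ n (hv_mem (n + 1))
    linarith [dist_triangle_right y v (u (n + 1))]
  refine ⟨v, hv_mem 0, fun y => ?_⟩
  by_contra! hlt
  have hyv := hv_unique y (by simp only [cone, mem_ofPred_eq]; linarith)
  subst hyv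
  simp at hlt

theorem exists_forall_le_add_mul_dist_ereal [CompleteSpace X] {G : X → EReal}
    (hG : LowerSemicontinuous G) (hbdd : ∃ B : ℝ, ∀ u, (B : EReal) ≤ G u) (hδ : 0 < δ) {z : X}
    (hz : G z ≠ ⊤) : ∃ v, G v ≤ G z ∧ ∀ y, G v ≤ G y + ((δ * dist y v : ℝ) : EReal) := by
  obtain ⟨B, hB⟩ := hbdd
  set M : ℝ := (G z).toReal + 1
  -- truncating `G` above `G z` makes it real-valued and leaves it unchanged on `{G ≤ G z}`
  set g : X → ℝ := fun u => (min (G u) M).toReal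
  have hg : ∀ u, (g u : EReal) = min (G u) M := fun u =>
    EReal.coe_toReal (min_le_right _ _ |>.trans_lt (EReal.coe_lt_top M)).ne
      (lt_min ((EReal.bot_lt_coe B).trans_le (hB u)) (EReal.bot_lt_coe M)).ne'
  have hGz : G z = (G z).toReal :=
    (EReal.coe_toReal hz ((EReal.bot_lt_coe B).trans_le (hB z)).ne').symm
  have hgz : g z = (G z).toReal := by
    have : min (G z) M = G z := min_eq_left (by rw [hGz]; exact_mod_cast (lt_add_one _).le)
    simp only [g, this]
  have hg_lsc : LowerSemicontinuous g :=
    .of_coe_ereal (by simpa only [hg] using hG.inf lowerSemicontinuous_const)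
  have hg_bdd : BddBelow (range g) := ⟨min B M, by
    rintro _ ⟨u, rfl⟩
    exact EReal.coe_le_coe_iff.1 <| (hg u).symm ▸ le_min
      ((EReal.coe_le_coe_iff.2 (min_le_left B M)).trans (hB u))
      (EReal.coe_le_coe_iff.2 (min_le_right B M))⟩
  obtain ⟨v, hvz, hv⟩ := exists_forall_le_add_mul_dist hg_lsc hg_bdd hδ z
  have hvz' : g v ≤ g z := by nlinarith [mul_nonneg hδ.le (dist_nonneg (x := v) (y := z))]
  have hgvM : g v < M := by linarith
  have hGv : G v = g v := by
    rw [hg]; refine (min_eq_left ?_).symm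
    by_contra! h
    exact hgvM.not_ge (EReal.coe_le_coe_iff.1 (by rw [hg, min_eq_right h.le]))
  refine ⟨v, ?_, fun y => ?_⟩
  · rw [hGv, hGz]; exact_mod_cast hgz ▸ hvz'
  · calc G v = g v := hGv
      _ ≤ ((g y + δ * dist y v : ℝ) : EReal) := by exact_mod_cast hv y
      _ ≤ G y + ((δ * dist y v : ℝ) : EReal) := by
        rw [EReal.coe_add, hg]; exact add_le_add_left (min_le_left _ _) _

end Ekeland

section ConvexAnalysis

variable {E : Type*} [NormedAddCommGroup E] [NormedSpace ℝ E] {f : E → EReal}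

theorem ERealConvexOn.convex_epigraph (hf : ERealConvexOn f) :
    Convex ℝ {p : E × ℝ | f p.1 ≤ p.2} := by
  rintro ⟨x, r⟩ hx ⟨y, s⟩ hy a b ha hb hab
  calc f (a • x + b • y) ≤ a * f x + b * f y := hf x y a b ha hb hab
    _ ≤ a * r + b * s := add_le_add (mul_le_mul_of_nonneg_left hx (by exact_mod_cast ha))
        (mul_le_mul_of_nonneg_left hy (by exact_mod_cast hb))
    _ = ((a • (x, r) + b • (y, s)).2 : ℝ) := by simp

theorem ContinuousLinearMap.exists_apply_prod_real_eq (L : StrongDual ℝ (E × ℝ))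
    (hL : L (0, 1) ≠ 0) : ∃ w : StrongDual ℝ E, ∀ y r, L (y, r) = L (0, 1) * (r - w y) := by
  refine ⟨-(L (0, 1))⁻¹ • L.comp (ContinuousLinearMap.inl ℝ E ℝ), fun y r => ?_⟩
  have hsplit : L (y, r) = L (y, 0) + r * L (0, 1) := by
    rw [← L.comp_inl_add_comp_inr, ← smul_eq_mul, ← map_smul]
    simp
  simp only [smul_apply, ContinuousLinearMap.comp_apply,
    ContinuousLinearMap.inl_apply, smul_eq_mul, hsplit]
  field_simp
  ring

theorem ERealConvexOn.exists_affine_le (hf : ERealConvexOn f) (hlsc : LowerSemicontinuous f)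
    {y₀ : E} {F : ℝ} (hy₀ : f y₀ = F) :
    ∃ (w : StrongDual ℝ E) (b : ℝ), ∀ y, ((w y + b : ℝ) : EReal) ≤ f y := by
  have hnot : (y₀, F - 1) ∉ {p : E × ℝ | f p.1 ≤ p.2} := by
    simp only [mem_ofPred_eq, hy₀, not_le]
    exact_mod_cast sub_one_lt F
  obtain ⟨L, u, hLu, hepi⟩ :=
    geometric_hahn_banach_point_closed hf.convex_epigraph hlsc.isClosed_real_epigraph hnot
  have hα : 0 < L (0, 1) := by
    have h := hepi (y₀, F) (by simp [hy₀])
    rw [show ((y₀, F) : E × ℝ) = (y₀, F - 1) + (0, 1) by simp, map_add] at h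
    linarith
  obtain ⟨w, hw⟩ := L.exists_apply_prod_real_eq hα.ne'
  refine ⟨w, u / L (0, 1), fun y => EReal.le_of_forall_lt_iff_le.1 fun r hr => ?_⟩
  have h : u / L (0, 1) < r - w y := (div_lt_iff₀' hα).2 (hw y r ▸ hepi (y, r) hr.le)
  exact_mod_cast (by linarith : w y + u / L (0, 1) ≤ r)

theorem ERealConvexOn.exists_mem_subdiff_of_forall_le_add (hf : ERealConvexOn f) {h : E → ℝ}
    (hh : ConvexOn ℝ univ h) (hh_cont : Continuous h) {v : E} {F : ℝ} (hv : f v = F)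
    (hmin : ∀ y, f v + h v ≤ f y + h y) : ∃ w ∈ subdiff f v, ∀ y, h v ≤ h y + w (y - v) := by
  set D : Set (E × ℝ) := {p | p.2 + h p.1 < F + h v}
  have hD_conv : Convex ℝ D := by
    simpa using (((LinearMap.snd ℝ E ℝ).convexOn convex_univ).add
      (hh.comp_linearMap (LinearMap.fst ℝ E ℝ))).convex_lt (F + h v)
  have hD_open : IsOpen D :=
    isOpen_lt (continuous_snd.add (hh_cont.comp continuous_fst)) continuous_const
  have hdisj : Disjoint D {p : E × ℝ | f p.1 ≤ p.2} := by
    refine Set.disjoint_left.2 fun ⟨y, r⟩ hD hC => ?_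
    have : ((F + h v : ℝ) : EReal) ≤ ((r + h y : ℝ) : EReal) := by
      simpa [← hv] using (hmin y).trans (add_le_add (show f y ≤ r from hC) le_rfl)
    exact (EReal.coe_le_coe_iff.1 this).not_gt hD
  obtain ⟨L, u, hLD, hLC⟩ := geometric_hahn_banach_open hD_conv hD_open hf.convex_epigraph hdisj
  have hα : 0 < L (0, 1) := by
    have hvD := hLD (v, F - 1) (by simp [D])
    have hvC := hLC (v, F) (by simp [hv])
    rw [show ((v, F) : E × ℝ) = (v, F - 1) + (0, 1) by simp, map_add] at hvC
    linarith
  obtain ⟨w, hw⟩ := L.exists_apply_prod_real_eq hα.ne'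
  set c := u / L (0, 1)
  have hD : ∀ y r, r + h y < F + h v → r - w y < c := fun y r hyr =>
    (lt_div_iff₀' hα).2 (hw y r ▸ hLD (y, r) hyr)
  have hC : ∀ y (r : ℝ), f y ≤ r → c ≤ r - w y := fun y r hyr =>
    (div_le_iff₀' hα).2 (hw y r ▸ hLC (y, r) hyr)
  have hc : c = F - w v := le_antisymm (hC v F hv.le) <| le_of_forall_lt fun r hr => by
    simpa using hD v (r + w v) (by linarith)
  refine ⟨w, fun y => EReal.le_of_forall_lt_iff_le.1 fun r hr => ?_, fun y => ?_⟩
  · have := hC y r hr.le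
    rw [hv, map_sub]
    exact_mod_cast (by linarith : F + (w y - w v) ≤ r)
  · rw [map_sub]
    refine le_of_forall_lt fun r hr => ?_
    have := hD y (F + r - h y) (by linarith)
    linarith

end ConvexAnalysis

section Rockafellar

variable {E : Type*} [NormedAddCommGroup E] [NormedSpace ℝ E] {f : E → EReal}

theorem ne_top_of_mem_subdiff (hproper : ∃ y, f y ≠ ⊤) {x : E} {x' : StrongDual ℝ E}
    (hx' : x' ∈ subdiff f x) : f x ≠ ⊤ := fun hx => by
  obtain ⟨y, hy⟩ := hproper
  have := hx' y
  rw [hx, EReal.top_add_coe, top_le_iff] at this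
  exact hy this

theorem subdiff_monotone {x z : E} {x' z' : StrongDual ℝ E} (hx : f x ≠ ⊤) (hx_bot : f x ≠ ⊥)
    (hx' : x' ∈ subdiff f x) (hz' : z' ∈ subdiff f z) : 0 ≤ (z' - x') (z - x) := by
  have h₁ := hx' z
  have h₂ := hz' x
  rw [← EReal.coe_toReal hx hx_bot] at h₁ h₂
  generalize f z = b at h₁ h₂
  induction b using EReal.rec with
  | bot => exact absurd (le_bot_iff.1 h₁) (by rw [← EReal.coe_add]; exact EReal.coe_ne_bot _)
  | top =>
    exact absurd (top_le_iff.1 ((EReal.top_add_coe _).symm.trans_le h₂)) (EReal.coe_ne_top _)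
  | coe c =>
    norm_cast at h₁ h₂
    rw [show x - z = -(z - x) by abel, map_neg] at h₂
    rw [sub_apply]
    linarith

noncomputable def quadraticTilt (x : E) (x' : StrongDual ℝ E) (t : ℝ) (u : E) : ℝ :=
  t / 2 * dist u x ^ 2 - x' (u - x)

variable {x : E} {x' : StrongDual ℝ E} {t : ℝ}

@[simp]
theorem quadraticTilt_self : quadraticTilt x x' t x = 0 := by simp [quadraticTilt]

theorem continuous_quadraticTilt : Continuous (quadraticTilt x x' t) := by
  unfold quadraticTilt; fun_prop

theorem convexOn_quadraticTilt (ht : 0 ≤ t) : ConvexOn ℝ univ (quadraticTilt x x' t) := by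
  have hsq : ConvexOn ℝ univ fun u => dist u x ^ 2 :=
    (convexOn_dist x convex_univ).pow (fun _ _ => dist_nonneg) 2
  have hlin := ((-x').toLinearMap.convexOn convex_univ).add_const (x' x)
  refine ((hsq.smul (by positivity : 0 ≤ t / 2)).add hlin).congr fun u _ => ?_
  simp [quadraticTilt, map_sub]
  ring

theorem exists_forall_le_apply_add_quadraticTilt (ℓ : StrongDual ℝ E) (ht : 0 < t) :
    ∃ B, ∀ u, B ≤ ℓ u + quadraticTilt x x' t u := by
  refine ⟨ℓ x - ‖ℓ - x'‖ ^ 2 / (2 * t), fun u => ?_⟩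
  have hop : -(‖ℓ - x'‖ * dist u x) ≤ (ℓ - x') (u - x) := by
    have := (ℓ - x').le_opNorm (u - x)
    rw [Real.norm_eq_abs, ← dist_eq_norm u x] at this
    exact (abs_le.1 this).1
  have hsq : -(‖ℓ - x'‖ ^ 2 / (2 * t)) ≤ -(‖ℓ - x'‖ * dist u x) + t / 2 * dist u x ^ 2 := by
    have : ‖ℓ - x'‖ ^ 2 / (2 * t) * (2 * t) = ‖ℓ - x'‖ ^ 2 := div_mul_cancel₀ _ (by positivity)
    nlinarith [sq_nonneg (t * dist u x - ‖ℓ - x'‖)]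
  simp only [quadraticTilt, sub_apply, map_sub] at hop ⊢
  linarith

theorem mem_subdiff_of_forall_le_add_quadraticTilt
    (h : ∀ t > 0, ∀ y, f x ≤ f y + quadraticTilt x x' t y) : x' ∈ subdiff f x := by
  intro y
  refine EReal.le_of_forall_lt_iff_le.1 fun z hz => ?_
  obtain ⟨r, hyr, hrz⟩ := EReal.exists_between_coe_real hz
  have hrz : r < z := by exact_mod_cast hrz
  set t := (z - r) / (dist y x ^ 2 + 1)
  have ht : 0 < t := div_pos (by linarith) (by positivity)
  have htz : t / 2 * dist y x ^ 2 ≤ z - r := by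
    have : t * (dist y x ^ 2 + 1) = z - r := div_mul_cancel₀ _ (by positivity)
    nlinarith [sq_nonneg (dist y x)]
  calc f x + x' (y - x) ≤ f y + quadraticTilt x x' t y + x' (y - x) :=
        add_le_add (h t ht y) le_rfl
    _ ≤ r + quadraticTilt x x' t y + x' (y - x) := add_le_add (add_le_add hyr.le le_rfl) le_rfl
    _ = ((r + t / 2 * dist y x ^ 2 : ℝ) : EReal) := by
        norm_cast; simp only [quadraticTilt]; ring
    _ ≤ z := by exact_mod_cast (by linarith : r + t / 2 * dist y x ^ 2 ≤ z)

theorem le_add_quadraticTilt_of_mem_monoPolar [CompleteSpace E] (hconv : ERealConvexOn f)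
    (hlsc : LowerSemicontinuous f) (hproper : ∃ y, f y ≠ ⊤) (hnotbot : ∀ x, f x ≠ ⊥)
    (hp : (x, x') ∈ monoPolar {p : E × StrongDual ℝ E | p.2 ∈ subdiff f p.1}) (ht : 0 < t)
    (y : E) : f x ≤ f y + quadraticTilt x x' t y := by
  set φ := quadraticTilt x x' t
  set G : E → EReal := fun u => f u + φ u
  have hG_lsc : LowerSemicontinuous G := hlsc.add_coe_real continuous_quadraticTilt
  have hG_bdd : ∃ B : ℝ, ∀ u, (B : EReal) ≤ G u := by
    obtain ⟨y₀, hy₀⟩ := hproper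
    obtain ⟨w, b, hwb⟩ := hconv.exists_affine_le hlsc (EReal.coe_toReal hy₀ (hnotbot y₀)).symm
    obtain ⟨B, hB⟩ := exists_forall_le_apply_add_quadraticTilt (x := x) (x' := x') w ht
    refine ⟨B + b, fun u => ?_⟩
    calc ((B + b : ℝ) : EReal) ≤ ((w u + b : ℝ) : EReal) + φ u := by
          rw [← EReal.coe_add]; exact_mod_cast (by linarith [hB u])
      _ ≤ G u := add_le_add (hwb u) le_rfl
  by_contra! hlt
  obtain ⟨c, hyc, hcx⟩ := EReal.exists_between_coe_real hlt
  obtain ⟨ε, hε, hball⟩ :=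
    Metric.eventually_nhds_iff.1 (hG_lsc x c (by simpa [G, φ] using hcx))
  set δ := t * ε / 4
  have hδ : 0 < δ := by positivity
  obtain ⟨v, hvy, hv⟩ := Ekeland.exists_forall_le_add_mul_dist_ereal hG_lsc hG_bdd hδ
    (hyc.trans (EReal.coe_lt_top c)).ne
  have hfv : f v ≠ ⊤ := fun h => by
    have : G v = ⊤ := by simp [G, h]
    exact (this ▸ hvy.trans_lt (hyc.trans (EReal.coe_lt_top c))).ne rfl
  obtain ⟨w, hw, hwh⟩ := hconv.exists_mem_subdiff_of_forall_le_add
    (h := fun u => φ u + δ * dist u v)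
    ((convexOn_quadraticTilt ht.le).add ((convexOn_dist v convex_univ).smul hδ.le))
    (continuous_quadraticTilt.add (continuous_const.mul (continuous_id.dist continuous_const)))
    (EReal.coe_toReal hfv (hnotbot v)).symm
    (fun u => by simpa [G, add_assoc] using hv u)
  -- monotonicity against `(v, w)` and the subgradient inequality of `-w` at `x` pin `v` near `x`
  have hquad : t / 2 * dist v x ^ 2 ≤ t * ε / 4 * dist v x := by
    have hmono : 0 ≤ (w - x') (v - x) := hp (v, w) hw
    have hloc := hwh x
    simp only [φ, δ, quadraticTilt, dist_self, dist_comm x v, map_sub, sub_apply] at hloc hmono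
    norm_num at hloc
    linarith
  have hdist : dist v x < ε := by
    by_contra! hεv
    have hd : 0 < dist v x := hε.trans_le hεv
    nlinarith [mul_le_mul_of_nonneg_left hεv (mul_nonneg ht.le hd.le), mul_pos ht (pow_pos hd 2)]
  exact (hball hdist).not_ge (hvy.trans hyc.le)

end Rockafellar

/-- Rockafellar's theorem: the subdifferential of a proper convex lower
semicontinuous function is maximally monotone. -/
theorem stmt17 {E : Type*} [NormedAddCommGroup E] [NormedSpace ℝ E] [CompleteSpace E]
    (f : E → EReal) (hproper : ∃ x, f x ≠ ⊤) (hnotbot : ∀ x, f x ≠ ⊥)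
    (hconv : ERealConvexOn f) (hlsc : LowerSemicontinuous f) :
    {p : E × StrongDual ℝ E | p.2 ∈ subdiff f p.1} =
      monoPolar {p : E × StrongDual ℝ E | p.2 ∈ subdiff f p.1} := by
  ext ⟨x, x'⟩
  refine ⟨fun hx' ⟨z, z'⟩ hz' => ?_, fun hp => ?_⟩
  · exact subdiff_monotone (ne_top_of_mem_subdiff hproper hx') (hnotbot x) hx' hz'
  · exact mem_subdiff_of_forall_le_add_quadraticTilt fun t ht =>
      le_add_quadraticTilt_of_mem_monoPolar hconv hlsc hproper hnotbot hp ht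
end
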